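/- Suppose G is connected and V is a compact symmetric (V = V⁻¹) neighborhood of the identity e in G such that there exist Q ∈ ℕ and c > 0 with lim_{k→∞} μ(V^k)/(c·k^Q) = 1, where V^k denotes the k-fold product set V·V⋯V. Then (V^k)_{k∈ℕ} is a Følner sequence in G. (This polynomial growth hypothesis holds in every simply connected, connected, nilpotent Lie group.) -/

import Mathlib

/-!
Fix a compact `K`. In a connected group a symmetric neighbourhood `V` of `1` generates
everything, and compactness gives `K ⊆ V ^ m` for some `m`. For `x ∈ K` the sets `V ^ k` and
`(V ^ k) x⁻¹` both lie in `V ^ (k + m)`, so by right invariance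
`β_{V ^ k}(x) ≤ (μ (V ^ (k + m)) - μ (V ^ k)) / μ (V ^ k)`, uniformly in `x ∈ K`. Polynomial
growth makes `μ (V ^ k)` asymptotically equivalent to `c k ^ Q`, and hence to `μ (V ^ (k + m))`,
so this bound tends to `0`.
-/

open MeasureTheory Filter Topology
open scoped Pointwise ENNReal

/-- For a Borel set `E` with `0 < μ E < ∞`, the Følner defect function
`β_E(x) = μ(E \ Ex⁻¹) / μ(E)`. Here `Ex⁻¹ = {y | yx ∈ E} = (· * x) ⁻¹' E`. -/
noncomputable def folnerDefect {G : Type*} [Group G] [MeasurableSpace G]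
    (μ : Measure G) (E : Set G) (x : G) : ℝ :=
  (μ (E \ (· * x) ⁻¹' E)).toReal / (μ E).toReal

/-- A sequence of Borel sets of finite positive measure is a Følner sequence if
`β_{E k} → 0` uniformly on every compact subset of `G`. -/
def IsFolnerSeq {G : Type*} [Group G] [TopologicalSpace G] [MeasurableSpace G]
    (μ : Measure G) (E : ℕ → Set G) : Prop :=
  ∀ K : Set G, IsCompact K →
    TendstoUniformlyOn (fun k x => folnerDefect μ (E k) x) 0 atTop K

open Asymptotics

theorem Set.inv_mem_pow_of_inv_eq {G : Type*} [Group G] {V : Set G} (hV : V⁻¹ = V) {n : ℕ}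
    {x : G} (hx : x ∈ V ^ n) : x⁻¹ ∈ V ^ n := by
  rw [← hV, inv_pow]
  exact Set.inv_mem_inv.2 hx

theorem Subgroup.exists_mem_pow_of_mem_closure {G : Type*} [Group G] {V : Set G} (hV : V⁻¹ = V)
    {x : G} (hx : x ∈ Subgroup.closure V) : ∃ n : ℕ, x ∈ V ^ n := by
  induction hx using Subgroup.closure_induction with
  | mem x hx => exact ⟨1, by rwa [pow_one]⟩
  | one => exact ⟨0, by rw [pow_zero]; rfl⟩
  | mul x y _ _ hx hy =>
    obtain ⟨a, ha⟩ := hx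
    obtain ⟨b, hb⟩ := hy
    exact ⟨a + b, by rw [pow_add]; exact Set.mul_mem_mul ha hb⟩
  | inv x _ hx =>
    obtain ⟨a, ha⟩ := hx
    exact ⟨a, Set.inv_mem_pow_of_inv_eq hV ha⟩

section Generation

variable {G : Type*} [Group G] [TopologicalSpace G] {V : Set G}

theorem IsCompact.pow [ContinuousMul G] (hV : IsCompact V) : ∀ n : ℕ, IsCompact (V ^ n)
  | 0 => by rw [pow_zero, ← Set.singleton_one]; exact isCompact_singleton
  | n + 1 => by simpa only [pow_succ] using (hV.pow n).mul hV

theorem Subgroup.closure_eq_top_of_mem_nhds [SeparatelyContinuousMul G] [ConnectedSpace G]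
    (hV : V ∈ 𝓝 (1 : G)) : Subgroup.closure V = ⊤ := by
  have hopen : IsOpen (Subgroup.closure V : Set G) :=
    (Subgroup.closure V).isOpen_of_mem_nhds (mem_of_superset hV Subgroup.subset_closure)
  exact Subgroup.coe_eq_univ.1 <|
    IsClopen.eq_univ ⟨Subgroup.isClosed_of_isOpen _ hopen, hopen⟩ ⟨1, one_mem _⟩

theorem mem_interior_pow_succ [IsTopologicalGroup G] (hV : V ∈ 𝓝 (1 : G)) {n : ℕ} {x : G}
    (hx : x ∈ V ^ n) : x ∈ interior (V ^ (n + 1)) := by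
  rw [mem_interior_iff_mem_nhds, pow_succ]
  exact mem_of_superset (singleton_mul_mem_nhds_of_nhds_one x hV)
    (Set.mul_subset_mul_right (Set.singleton_subset_iff.2 hx))

theorem IsCompact.exists_subset_pow [IsTopologicalGroup G] [ConnectedSpace G] {K : Set G}
    (hK : IsCompact K) (hVsymm : V⁻¹ = V) (hV : V ∈ 𝓝 (1 : G)) : ∃ n : ℕ, K ⊆ V ^ n := by
  have hcover : K ⊆ ⋃ n : ℕ, interior (V ^ n) := fun x _ => by
    obtain ⟨n, hn⟩ := Subgroup.exists_mem_pow_of_mem_closure hVsymm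
      (Subgroup.closure_eq_top_of_mem_nhds hV ▸ Subgroup.mem_top x)
    exact Set.mem_iUnion.2 ⟨n + 1, mem_interior_pow_succ hV hn⟩
  have hmono : Monotone fun n : ℕ => interior (V ^ n) := fun _ _ h =>
    interior_mono (Set.pow_subset_pow_right (mem_of_mem_nhds hV) h)
  obtain ⟨n, hn⟩ := hK.elim_directed_cover _ (fun _ => isOpen_interior) hcover hmono.directed_le
  exact ⟨n, hn.trans interior_subset⟩

end Generation

theorem Set.preimage_mul_right_subset_mul {G : Type*} [Group G] {E W : Set G} {x : G}
    (hx : x⁻¹ ∈ W) : (· * x) ⁻¹' E ⊆ E * W :=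
  fun y hy => ⟨y * x, hy, x⁻¹, hx, mul_inv_cancel_right y x⟩

section Defect

variable {G : Type*} [Group G] [MeasurableSpace G] (μ : Measure G) {E F : Set G} (x : G)

theorem folnerDefect_nonneg : 0 ≤ folnerDefect μ E x := by
  unfold folnerDefect
  positivity

variable [MeasurableMul G] [μ.IsMulRightInvariant]

theorem measure_diff_preimage_mul_right_le (hE : MeasurableSet E) (hEfin : μ E ≠ ∞)
    (hEF : E ⊆ F) (hxF : (· * x) ⁻¹' E ⊆ F) : μ (E \ (· * x) ⁻¹' E) ≤ μ F - μ E := by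
  rw [← measure_preimage_mul_right μ x E] at hEfin ⊢
  refine ENNReal.le_sub_of_add_le_right hEfin ?_
  rw [← measure_union Set.disjoint_sdiff_left (measurable_mul_const x hE), Set.sdiff_union_self]
  exact measure_mono (Set.union_subset hEF hxF)

theorem folnerDefect_le (hE : MeasurableSet E) (hF : μ F ≠ ∞) (hEF : E ⊆ F)
    (hxF : (· * x) ⁻¹' E ⊆ F) :
    folnerDefect μ E x ≤ ((μ F).toReal - (μ E).toReal) / (μ E).toReal := by
  have hEfin : μ E ≠ ∞ := ne_top_of_le_ne_top hF (measure_mono hEF)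
  unfold folnerDefect
  gcongr
  rw [← ENNReal.toReal_sub_of_le (measure_mono hEF) hF]
  exact ENNReal.toReal_mono (ne_top_of_le_ne_top hF tsub_le_self)
    (measure_diff_preimage_mul_right_le μ x hE hEfin hEF hxF)

end Defect

theorem isEquivalent_comp_add_of_isEquivalent_const_mul_pow {a : ℕ → ℝ} {c : ℝ} {Q : ℕ}
    (ha : a ~[atTop] fun k => c * (k : ℝ) ^ Q) (m : ℕ) : (fun k => a (k + m)) ~[atTop] a := by
  have hshift : (fun k : ℕ => ((k + m : ℕ) : ℝ)) ~[atTop] fun k => (k : ℝ) := by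
    refine (IsEquivalent.refl.add_isLittleO ?_).congr_left
      (Eventually.of_forall fun k => (Nat.cast_add k m).symm)
    exact (isLittleO_const_id_atTop (m : ℝ)).comp_tendsto tendsto_natCast_atTop_atTop
  have hpoly : (fun k : ℕ => c * ((k + m : ℕ) : ℝ) ^ Q) ~[atTop] fun k => c * (k : ℝ) ^ Q :=
    IsEquivalent.refl.mul (hshift.pow Q)
  exact ((ha.comp_tendsto (tendsto_add_atTop_nat m)).trans hpoly).trans ha.symm

theorem tendstoUniformlyOn_zero_of_le {ι α : Type*} {l : Filter ι} {f : ι → α → ℝ} {b : ι → ℝ}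
    {K : Set α} (hb : Tendsto b l (𝓝 0)) (hf : ∀ i, ∀ x ∈ K, 0 ≤ f i x)
    (hfb : ∀ᶠ i in l, ∀ x ∈ K, f i x ≤ b i) : TendstoUniformlyOn f 0 l K := by
  rw [SeminormedAddGroup.tendstoUniformlyOn_zero]
  intro ε hε
  filter_upwards [hfb, hb.eventually (gt_mem_nhds hε)] with i hi hbi x hx
  rw [Real.norm_of_nonneg (hf i x hx)]
  exact (hi x hx).trans_lt hbi

theorem isFolnerSeq_pow_of_polynomialGrowth_general {G : Type*} [Group G] [TopologicalSpace G]
    [IsTopologicalGroup G] [T2Space G]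
    [ConnectedSpace G] [MeasurableSpace G] [BorelSpace G]
    (μ : Measure G) [μ.IsMulRightInvariant] [IsFiniteMeasureOnCompacts μ]
    (V : Set G) (hVcomp : IsCompact V) (hVsymm : V⁻¹ = V) (hVnhd : V ∈ nhds (1 : G))
    (Q : ℕ) (c : ℝ)
    (hgrowth : Tendsto (fun k : ℕ => (μ (V ^ k)).toReal / (c * (k : ℝ) ^ Q))
      atTop (nhds 1)) :
    IsFolnerSeq μ (fun k => V ^ k) := by
  intro K hK
  obtain ⟨m, hKm⟩ := hK.exists_subset_pow hVsymm hVnhd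
  have hshift := isEquivalent_comp_add_of_isEquivalent_const_mul_pow
    (isEquivalent_of_tendsto_one hgrowth) m
  refine tendstoUniformlyOn_zero_of_le hshift.isLittleO.tendsto_div_nhds_zero
    (fun k x _ => folnerDefect_nonneg μ x) (Eventually.of_forall fun k x hx => ?_)
  refine folnerDefect_le μ x (hVcomp.pow k).measurableSet (hVcomp.pow _).measure_lt_top.ne
    (Set.pow_subset_pow_right (mem_of_mem_nhds hVnhd) (k.le_add_right m)) ?_
  rw [pow_add]
  exact Set.preimage_mul_right_subset_mul (Set.inv_mem_pow_of_inv_eq hVsymm (hKm hx))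

/-- If `G` is connected and `V` is a compact symmetric neighborhood of the
identity with polynomial growth `μ(V^k)/(c·k^Q) → 1`, then `(V^k)` is a Følner sequence. -/
theorem isFolnerSeq_pow_of_polynomialGrowth {G : Type*} [Group G] [TopologicalSpace G]
    [IsTopologicalGroup G] [LocallyCompactSpace G] [SigmaCompactSpace G] [T2Space G]
    [ConnectedSpace G] [MeasurableSpace G] [BorelSpace G]
    (μ : Measure G) [μ.IsMulRightInvariant] [IsFiniteMeasureOnCompacts μ]
    [μ.IsOpenPosMeasure] [μ.Regular] (hμ : μ ≠ 0)
    (V : Set G) (hVcomp : IsCompact V) (hVsymm : V⁻¹ = V) (hVnhd : V ∈ nhds (1 : G))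
    (Q : ℕ) (c : ℝ) (hc : 0 < c)
    (hgrowth : Tendsto (fun k : ℕ => (μ (V ^ k)).toReal / (c * (k : ℝ) ^ Q))
      atTop (nhds 1)) :
    IsFolnerSeq μ (fun k => V ^ k) :=
  isFolnerSeq_pow_of_polynomialGrowth_general μ V hVcomp hVsymm hVnhd Q c hgrowth
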